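/- Space lower bound for top-1 LCP data structures (information-theoretic core): let Σ be a finite alphabet of size σ, and let N ≤ σ^L. Suppose D is a function from the N-element subsets of Σ^L to Fin M (i.e., data structure states encoded in M possible values) and A : Fin M → Σ^L → ℕ is an answer function such that for every N-element subset S of Σ^L and every query q ∈ Σ^L, A (D S) q = max over s ∈ S of LCP(q,s). Then D is injective, and consequently M ≥ C(σ^L, N). -/

import Mathlib

/-- The length of the longest common prefix of two sequences `s t : Fin L → Alph`:
the largest `j ∈ {0,…,L}` such that `s i = t i` for all `i < j`. -/
def LCP {Alph : Type*} [DecidableEq Alph] {L : ℕ} (s t : Fin L → Alph) : ℕ :=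
  Nat.findGreatest (fun j => ∀ i : Fin L, (i : ℕ) < j → s i = t i) L

/-!
A set `S` of length-`L` strings is recovered from its top-1 LCP answers: `q ∈ S` exactly when
the maximal LCP of `q` against `S` is the full length `L` (for nonempty `S`). Hence the state
`D S` determines `S`, so `D` is injective and `M` is at least the number `C(σ^L, N)` of datasets.
-/

section LCP

variable {Alph : Type*} [DecidableEq Alph] {L : ℕ}

theorem LCP_le (s t : Fin L → Alph) : LCP s t ≤ L :=
  Nat.findGreatest_le L

@[simp]
theorem LCP_self (s : Fin L → Alph) : LCP s s = L :=
  le_antisymm (LCP_le s s) (Nat.le_findGreatest le_rfl fun _ _ => rfl)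

theorem LCP_eq_length_iff {s t : Fin L → Alph} : LCP s t = L ↔ s = t := by
  refine ⟨fun h => funext fun i => ?_, fun h => h ▸ LCP_self s⟩
  rw [LCP, Nat.findGreatest_eq_iff] at h
  exact h.2.1 (Nat.ne_zero_of_lt i.2) i i.2

theorem Finset.mem_iff_sup_LCP_eq_length {S : Finset (Fin L → Alph)} (hS : S.Nonempty)
    (q : Fin L → Alph) : q ∈ S ↔ S.sup (LCP q) = L := by
  constructor
  · intro hq
    exact le_antisymm (Finset.sup_le fun s _ => LCP_le q s)
      ((LCP_self q).ge.trans (Finset.le_sup (f := LCP q) hq))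
  · intro h
    obtain ⟨s, hs, hsup⟩ := S.exists_mem_eq_sup hS (LCP q)
    rw [hsup, LCP_eq_length_iff] at h
    exact h ▸ hs

theorem Finset.eq_of_sup_LCP_eq {S T : Finset (Fin L → Alph)} (hcard : S.card = T.card)
    (h : ∀ q, S.sup (LCP q) = T.sup (LCP q)) : S = T := by
  rcases S.eq_empty_or_nonempty with rfl | hS
  · exact (Finset.card_eq_zero.mp hcard.symm).symm
  · have hT : T.Nonempty := Finset.card_pos.mp (hcard ▸ hS.card_pos)
    ext q
    rw [Finset.mem_iff_sup_LCP_eq_length hS, Finset.mem_iff_sup_LCP_eq_length hT, h]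

end LCP

theorem space_lower_bound_general {Alph : Type*} [Fintype Alph] [DecidableEq Alph]
    {L σ N M : ℕ} (hσ : Fintype.card Alph = σ)
    (D : {S : Finset (Fin L → Alph) // S.card = N} → Fin M)
    (A : Fin M → (Fin L → Alph) → ℕ)
    (hA : ∀ (S : {S : Finset (Fin L → Alph) // S.card = N}) (q : Fin L → Alph),
        A (D S) q = S.1.sup (fun s => LCP q s)) :
    Function.Injective D ∧ (σ ^ L).choose N ≤ M := by
  have hinj : Function.Injective D := fun S T hST =>
    Subtype.ext <| Finset.eq_of_sup_LCP_eq (S.2.trans T.2.symm) fun q => by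
      rw [← hA, ← hA, hST]
  refine ⟨hinj, ?_⟩
  calc (σ ^ L).choose N = Fintype.card {S : Finset (Fin L → Alph) // S.card = N} := by
        rw [Fintype.card_finset_len, Fintype.card_fun, hσ, Fintype.card_fin]
    _ ≤ Fintype.card (Fin M) := Fintype.card_le_of_injective D hinj
    _ = M := Fintype.card_fin M

/-- Information-theoretic space lower bound for top-1 LCP data structures:
any encoding `D` of `N`-element datasets into `M` states that admits an answer
function `A` computing the maximal LCP for every query is injective, hence
`M ≥ C(σ^L, N)`. -/
theorem space_lower_bound {Alph : Type*} [Fintype Alph] [DecidableEq Alph]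
    {L σ N M : ℕ} (hσ : Fintype.card Alph = σ) (hN : N ≤ σ ^ L)
    (D : {S : Finset (Fin L → Alph) // S.card = N} → Fin M)
    (A : Fin M → (Fin L → Alph) → ℕ)
    (hA : ∀ (S : {S : Finset (Fin L → Alph) // S.card = N}) (q : Fin L → Alph),
        A (D S) q = S.1.sup (fun s => LCP q s)) :
    Function.Injective D ∧ (σ ^ L).choose N ≤ M :=
  space_lower_bound_general hσ D A hA
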